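/- Let G and H be reflexive weakly connected digraphs and α, β : G → H homomorphisms such that α(C) = β(C) = ε in π(\bar H) for every closed walk C in G. Let q ∈ V(G) and let Q be a reduced walk from α(q) to β(q); for each v ∈ V(G) let S_v be the reduced walk α(W)⁻¹ · Q · β(W) for any walk W from q to v in G. Then Q is H-realizable for α, β, q (via an H-recoloring sequence satisfying the push-or-pull property) if and only if for every directed closed walk u₁ → u₂ → … → u_n → u₁ in G (n ≥ 2), each of the walks S_{u₁}, …, S_{u_n} is symmetric. -/

import Mathlib

/-!
Forward direction: a push-or-pull step commutes with the edges of `G` in `π(H)`, so transporting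
the color walk of `q` along a walk from `q` to `v` gives the color walk of `v`; hence `S v` is the
reduced form of the color walk of `v`. Since `v → v`, every Hom₁ step moves the color of `v` along a
symmetric arc, and reduction keeps a walk symmetric.

Backward direction: every `v` lies on the directed closed walk `v → v → v`, so every `S v` is
symmetric. Recoloring a vertex `v` to the second vertex `c` of `S v` is a Hom₁ push-or-pull step
as soon as all neighbours of `v` have color `α v` or `c`; it shortens `S v` by one edge and keeps
the system of walks compatible, so induction on the total length finishes the proof. Such a `v`
exists: otherwise, starting from a longest `S v`, every vertex has a neighbour whose walk is
forced, giving an infinite walk in `G` with reduced image under `α`; by finiteness it closes up,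
contradicting `α(C) = ε`.

Uniqueness of reduced forms comes from embedding walks of `H` into the free group on ordered pairs
of vertices of `H`.
-/

namespace HRecoloring

/-- A digraph: a vertex type together with an arc relation. -/
structure Dgraph (V : Type) where
  Adj : V → V → Prop

variable {V X : Type}

/-- Adjacency in the underlying undirected graph. -/
def Dgraph.UAdj (G : Dgraph V) (u v : V) : Prop := G.Adj u v ∨ G.Adj v u

/-- A digraph is loopless if it has no arc `v → v`. -/
def Dgraph.Loopless (G : Dgraph V) : Prop := ∀ v, ¬ G.Adj v v

/-- A digraph is reflexive if `v → v` for every vertex `v`. -/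
def Dgraph.IsReflexive (G : Dgraph V) : Prop := ∀ v, G.Adj v v

/-- A symmetric digraph, which we identify with an undirected graph. -/
def Dgraph.IsSymmetric (G : Dgraph V) : Prop := ∀ u v, G.Adj u v → G.Adj v u

/-- The underlying undirected graph, as a symmetric digraph. -/
def Dgraph.usym (G : Dgraph V) : Dgraph V := ⟨fun u v => G.UAdj u v⟩

/-- A (di)graph homomorphism. -/
def IsHom (G : Dgraph V) (H : Dgraph X) (f : V → X) : Prop :=
  ∀ ⦃u v⦄, G.Adj u v → H.Adj (f u) (f v)

/-- A walk from `a` to `b`, encoded by its list of successive vertices.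
A walk in a digraph is a walk in its underlying undirected graph. -/
def IsWalk (G : Dgraph V) (a b : V) (l : List V) : Prop :=
  l ≠ [] ∧ l.head? = some a ∧ l.getLast? = some b ∧ l.Chain' G.UAdj

/-- Weak connectivity. -/
def Dgraph.WConn (G : Dgraph V) : Prop := ∀ u v : V, ∃ l, IsWalk G u v l

/-- Concatenation of two walks sharing an endpoint. -/
def wcomp (l₁ l₂ : List V) : List V := l₁ ++ l₂.tail

/-- Number of edges of a walk. -/
def wlen (l : List V) : ℕ := l.length - 1

/-- One reduction step on walks: delete a backtracking pair `(x y)(y x)` or a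
one-edge loop step `(x x)`. -/
def RStep (l l' : List V) : Prop :=
  (∃ (p s : List V) (x y : V), l = p ++ [x, y, x] ++ s ∧ l' = p ++ [x] ++ s) ∨
  (∃ (p s : List V) (x : V), l = p ++ [x, x] ++ s ∧ l' = p ++ [x] ++ s)

/-- Equality of walks in the fundamental groupoid `π(H)`: the equivalence
generated by reduction steps (two walks are equal in `π(H)` iff they reduce to
the same reduced walk). -/
def PiEq (l l' : List V) : Prop := Relation.EqvGen RStep l l'

/-- A walk is reduced if no reduction step applies to it. -/
def IsReduced (l : List V) : Prop := ∀ l', ¬ RStep l l'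

/-- A closed walk is cyclically reduced if it is reduced and its first and last
edges are not inverses of each other. -/
def IsCycReduced (l : List V) : Prop :=
  IsReduced l ∧ ∃ h : 2 ≤ l.length,
    l.get ⟨1, by omega⟩ ≠ l.get ⟨l.length - 2, by omega⟩

/-- `n`-fold concatenation of a closed walk `R` based at `h`. -/
def witer (R : List V) (h : V) : ℕ → List V
  | 0 => [h]
  | n + 1 => wcomp R (witer R h n)

/-- `Rⁿ` for an integer `n`, for a closed walk `R` based at `h`; for `n < 0`
this is the `|n|`-fold concatenation of the reversed walk `R⁻¹`. -/
def zpowWalk (R : List V) (h : V) (n : ℤ) : List V :=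
  if 0 ≤ n then witer R h n.toNat else witer R.reverse h (-n).toNat

/-- A walk is symmetric if every edge it traverses is a symmetric arc. -/
def IsSymWalk (H : Dgraph X) (l : List X) : Prop :=
  l.Chain' fun a b => H.Adj a b ∧ H.Adj b a

/-- The conjugated walk `α(W)⁻¹ · Q · β(W)`. -/
def conj (α β : V → X) (Wl : List V) (Q : List X) : List X :=
  wcomp (wcomp (Wl.map α).reverse Q) (Wl.map β)

/-- Topological validity of a walk `Q` from `α q` to `β q`:
`β(C) = Q⁻¹ · α(C) · Q` in `π(H)` for every closed walk `C` at `q`. -/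
def TopValid (G : Dgraph V) (H : Dgraph X) (α β : V → X) (q : V) (Q : List X) : Prop :=
  ∀ C : List V, IsWalk G q q C →
    PiEq (C.map β) (wcomp (wcomp Q.reverse (C.map α)) Q)

/-- IN-zigzag pattern `a₁ ← a₂ → a₃ ← … ← a_{n-1} → a_n`. -/
def INCompatible (H : Dgraph X) (l : List X) : Prop :=
  ∀ (i : ℕ) (h : i + 1 < l.length),
    if i % 2 = 0 then H.Adj (l.get ⟨i + 1, h⟩) (l.get ⟨i, by omega⟩)
    else H.Adj (l.get ⟨i, by omega⟩) (l.get ⟨i + 1, h⟩)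

/-- OUT-zigzag pattern `a₁ → a₂ ← a₃ → … → a_{n-1} ← a_n`. -/
def OUTCompatible (H : Dgraph X) (l : List X) : Prop :=
  ∀ (i : ℕ) (h : i + 1 < l.length),
    if i % 2 = 0 then H.Adj (l.get ⟨i, by omega⟩) (l.get ⟨i + 1, h⟩)
    else H.Adj (l.get ⟨i + 1, h⟩) (l.get ⟨i, by omega⟩)

/-- A vertex is of type IN if it has an in-neighbor. -/
def TypeIN (G : Dgraph V) (v : V) : Prop := ∃ u, G.Adj u v

/-- A vertex is of type OUT if it has an out-neighbor. -/
def TypeOUT (G : Dgraph V) (v : V) : Prop := ∃ u, G.Adj v u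

/-- A vertex is of type SYM if it is of type IN and of type OUT. -/
def TypeSYM (G : Dgraph V) (v : V) : Prop := TypeIN G v ∧ TypeOUT G v

/-- The zigzag condition for the vertex `v`. -/
def Zigzag (G : Dgraph V) (H : Dgraph X) (v : V) (l : List X) : Prop :=
  (TypeIN G v → INCompatible H l) ∧ (TypeOUT G v → OUTCompatible H l)

/-- A recoloring sequence: a nonempty sequence of homomorphisms in which
consecutive homomorphisms differ on exactly one vertex. -/
def IsRecolSeq (G : Dgraph V) (H : Dgraph X) (σs : List (V → X)) : Prop :=
  σs ≠ [] ∧ (∀ σ ∈ σs, IsHom G H σ) ∧ σs.Chain' fun σ σ' => ∃! u, σ u ≠ σ' u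

/-- The monochromatic neighborhood property: whenever a vertex changes its
color, all of its neighbors (in the underlying undirected graph) have one
common color. -/
def MonoNbhd (G : Dgraph V) (σs : List (V → X)) : Prop :=
  σs.Chain' fun σ σ' => ∀ v, σ v ≠ σ' v → ∃ h, ∀ w, G.UAdj v w → σ w = h

/-- `VWalk G v σs S`: `S` is the vertex walk `S(v)` of the recoloring sequence
`σs`; each color change of `v` from `a` to `b`, while all neighbors of `v` are
colored `h`, contributes the two edges `(a h)(h b)`. -/
inductive VWalk (G : Dgraph V) (v : V) : List (V → X) → List X → Prop
  | single (σ : V → X) : VWalk G v [σ] [σ v]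
  | stay {σ σ' : V → X} {rest : List (V → X)} {l : List X} :
      σ v = σ' v → VWalk G v (σ' :: rest) l → VWalk G v (σ :: σ' :: rest) l
  | move {σ σ' : V → X} {rest : List (V → X)} {l : List X} (h : X) :
      σ v ≠ σ' v → (∀ w, G.UAdj v w → σ w = h) →
      VWalk G v (σ' :: rest) l → VWalk G v (σ :: σ' :: rest) (σ v :: h :: l)

/-- `H`-realizability of a walk `Q` via recoloring sequences satisfying the
monochromatic neighborhood property: `Q = S(q)` in `π(H)`. -/
def MRealizable (G : Dgraph V) (H : Dgraph X) (α β : V → X) (q : V) (Q : List X) : Prop :=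
  ∃ (σs : List (V → X)) (Sq : List X),
    IsRecolSeq G H σs ∧ σs.head? = some α ∧ σs.getLast? = some β ∧
    MonoNbhd G σs ∧ VWalk G q σs Sq ∧ PiEq Sq Q

/-- Orientation compatibility of a walk `Q`: every generated vertex walk
satisfies the zigzag condition. -/
def OrientCompatible (G : Dgraph V) (H : Dgraph X) (α β : V → X) (q : V) (Q : List X) : Prop :=
  ∀ (v : V) (Wl : List V), IsWalk G q v Wl →
    ∀ S : List X, IsReduced S → PiEq (conj α β Wl Q) S → Zigzag G H v S

/-- Hom₁-adjacency: the homomorphisms differ on exactly one vertex and, for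
every arc `x → y` of `G`, both `φ x → ψ y` and `ψ x → φ y` are arcs of `H`. -/
def Hom1Adj (G : Dgraph V) (H : Dgraph X) (φ ψ : V → X) : Prop :=
  (∃! u, φ u ≠ ψ u) ∧ ∀ ⦃x y⦄, G.Adj x y → H.Adj (φ x) (ψ y) ∧ H.Adj (ψ x) (φ y)

/-- A recoloring sequence in the Hom₁ sense (digraphs). -/
def Hom1Seq (G : Dgraph V) (H : Dgraph X) (σs : List (V → X)) : Prop :=
  σs ≠ [] ∧ (∀ σ ∈ σs, IsHom G H σ) ∧ σs.Chain' (Hom1Adj G H)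

/-- A recoloring sequence in which each step recolors exactly one vertex to an
adjacent color (the Hom₁ sense for reflexive undirected graphs). -/
def AdjRecolSeq (G : Dgraph V) (H : Dgraph X) (σs : List (V → X)) : Prop :=
  σs ≠ [] ∧ (∀ σ ∈ σs, IsHom G H σ) ∧
  σs.Chain' fun σ σ' => (∃! u, σ u ≠ σ' u) ∧ ∀ u, σ u ≠ σ' u → H.Adj (σ u) (σ' u)

/-- The push-or-pull property: whenever a vertex changes its color from `a` to
`b`, every neighbor of that vertex has color `a` or `b`. -/
def PushOrPull (G : Dgraph V) (σs : List (V → X)) : Prop :=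
  σs.Chain' fun σ σ' => ∀ u, σ u ≠ σ' u → ∀ w, G.UAdj u w → σ w = σ u ∨ σ w = σ' u

/-- The walk of successive colors of `v` along a recoloring sequence. -/
def colorWalk (σs : List (V → X)) (v : V) : List X := σs.map fun σ => σ v

/-- `H`-realizability via recoloring sequences (reflexive undirected Hom₁
sense) satisfying the push-or-pull property. -/
def PRealizable (G : Dgraph V) (H : Dgraph X) (α β : V → X) (q : V) (Q : List X) : Prop :=
  ∃ σs : List (V → X), AdjRecolSeq G H σs ∧ σs.head? = some α ∧ σs.getLast? = some β ∧
    PushOrPull G σs ∧ PiEq (colorWalk σs q) Q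

/-- `H`-realizability via Hom₁ recoloring sequences of digraphs satisfying the
push-or-pull property. -/
def DRealizable (G : Dgraph V) (H : Dgraph X) (α β : V → X) (q : V) (Q : List X) : Prop :=
  ∃ σs : List (V → X), Hom1Seq G H σs ∧ σs.head? = some α ∧ σs.getLast? = some β ∧
    PushOrPull G σs ∧ PiEq (colorWalk σs q) Q

/-- `H` contains no 4-cycle of algebraic girth 0 as a subgraph (neither of the
two orientations of the 4-cycle with two forward and two backward arcs). -/
def NoZeroGirthC4 (H : Dgraph X) : Prop :=
  ∀ a b c d : X, a ≠ b → a ≠ c → a ≠ d → b ≠ c → b ≠ d → c ≠ d →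
    ¬(H.Adj a b ∧ H.Adj b d ∧ H.Adj a c ∧ H.Adj c d) ∧
    ¬(H.Adj a b ∧ H.Adj d b ∧ H.Adj a c ∧ H.Adj d c)

/-- `H` contains no triangle of algebraic girth 1 as a subgraph. -/
def NoOneGirthTriangle (H : Dgraph X) : Prop :=
  ∀ x y z : X, x ≠ y → y ≠ z → x ≠ z → ¬(H.Adj x y ∧ H.Adj y z ∧ H.Adj x z)

/-- A path in the reconfiguration graph `R_H(G)` from `α` to `β`. -/
def IsRPath (G : Dgraph V) (H : Dgraph X) (α β : V → X) (L : List (V → X)) : Prop :=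
  L ≠ [] ∧ L.head? = some α ∧ L.getLast? = some β ∧
  (∀ σ ∈ L, IsHom G H σ) ∧ L.Chain' fun φ ψ => ∃! u, φ u ≠ ψ u

/-- A path in the graph `Hom₁(G, H)` from `α` to `β`. -/
def IsHom1Path (G : Dgraph V) (H : Dgraph X) (α β : V → X) (L : List (V → X)) : Prop :=
  L ≠ [] ∧ L.head? = some α ∧ L.getLast? = some β ∧
  (∀ σ ∈ L, IsHom G H σ) ∧ L.Chain' (Hom1Adj G H)

/-- The set of reduced walks `Q` from `α q` to `β q` that generate symmetric
vertex walks on `V'` with the system of walks `Wf`. -/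
def SymGenSet (H : Dgraph X) (α β : V → X) (q : V)
    (V' : Set V) (Wf : V → List V) : Set (List X) :=
  {Q | IsWalk H (α q) (β q) Q ∧ IsReduced Q ∧
    ∀ v ∈ V', ∀ S : List X, IsReduced S → PiEq (conj α β (Wf v) Q) S → IsSymWalk H S}

/-- The set of orientation-compatible walks for `q` and the system `Uf`. -/
def OCSet (G : Dgraph V) (H : Dgraph X) (α β : V → X) (q : V)
    (Uf : V → List V) : Set (List X) :=
  {Q | IsWalk H (α q) (β q) Q ∧ IsReduced Q ∧ Even (wlen Q) ∧
    ∀ (v : V) (S : List X), IsReduced S → PiEq (conj α β (Uf v) Q) S → Zigzag G H v S}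

/-- The set `Π_q` of walks from `α q` to `β q` that are `H`-realizable via
recoloring sequences satisfying the monochromatic neighborhood property. -/
def MRealSet (G : Dgraph V) (H : Dgraph X) (α β : V → X) (q : V) : Set (List X) :=
  {Q | IsWalk H (α q) (β q) Q ∧ IsReduced Q ∧ MRealizable G H α β q Q}

/-- The set of walks from `α q` to `β q` that are `H`-realizable via
recoloring sequences satisfying the push-or-pull property. -/
def PRealSet (G : Dgraph V) (H : Dgraph X) (α β : V → X) (q : V) : Set (List X) :=
  {Q | IsWalk H (α q) (β q) Q ∧ IsReduced Q ∧ PRealizable G H α β q Q}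

/-- Ceiling division on natural numbers. -/
def cdiv (a b : ℕ) : ℕ := (a + b - 1) / b

end HRecoloring

namespace HRecoloring

section Reduction

variable {X : Type} {l l' l₁ l₂ l₃ : List X}

theorem RStep.append_left (p : List X) (h : RStep l l') : RStep (p ++ l) (p ++ l') := by
  rcases h with ⟨u, s, x, y, rfl, rfl⟩ | ⟨u, s, x, rfl, rfl⟩
  · exact Or.inl ⟨p ++ u, s, x, y, by simp, by simp⟩
  · exact Or.inr ⟨p ++ u, s, x, by simp, by simp⟩

theorem RStep.append_right (s : List X) (h : RStep l l') : RStep (l ++ s) (l' ++ s) := by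
  rcases h with ⟨u, t, x, y, rfl, rfl⟩ | ⟨u, t, x, rfl, rfl⟩
  · exact Or.inl ⟨u, t ++ s, x, y, by simp, by simp⟩
  · exact Or.inr ⟨u, t ++ s, x, by simp, by simp⟩

theorem RStep.reverse (h : RStep l l') : RStep l.reverse l'.reverse := by
  rcases h with ⟨u, s, x, y, rfl, rfl⟩ | ⟨u, s, x, rfl, rfl⟩
  · exact Or.inl ⟨s.reverse, u.reverse, x, y, by simp, by simp⟩
  · exact Or.inr ⟨s.reverse, u.reverse, x, by simp, by simp⟩

theorem RStep.length_lt (h : RStep l l') : l'.length < l.length := by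
  rcases h with ⟨p, s, x, y, rfl, rfl⟩ | ⟨p, s, x, rfl, rfl⟩ <;> simp

theorem RStep.head?_eq (h : RStep l l') : l.head? = l'.head? := by
  rcases h with ⟨p, s, x, y, rfl, rfl⟩ | ⟨p, s, x, rfl, rfl⟩ <;> cases p <;> simp

theorem RStep.isChain {R : X → X → Prop} (h : RStep l l') (hl : l.IsChain R) :
    l'.IsChain R := by
  rcases h with ⟨p, s, x, y, rfl, rfl⟩ | ⟨p, s, x, rfl, rfl⟩
  · exact (hl.infix ⟨[], [y, x] ++ s, by simp⟩).append_overlap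
      (hl.infix ⟨p ++ [x, y], [], by simp⟩) (List.cons_ne_nil x [])
  · exact (hl.infix ⟨[], [x] ++ s, by simp⟩).append_overlap
      (hl.infix ⟨p ++ [x], [], by simp⟩) (List.cons_ne_nil x [])

theorem RStep.piEq (h : RStep l l') : PiEq l l' := Relation.EqvGen.rel _ _ h

namespace PiEq

@[refl] theorem refl (l : List X) : PiEq l l := Relation.EqvGen.refl l

theorem symm (h : PiEq l l') : PiEq l' l := Relation.EqvGen.symm _ _ h

theorem trans (h : PiEq l₁ l₂) (h' : PiEq l₂ l₃) : PiEq l₁ l₃ :=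
  Relation.EqvGen.trans _ _ _ h h'

theorem map_of_rstep {Y : Type} {f : List X → List Y} (hf : ∀ a b, RStep a b → RStep (f a) (f b))
    (h : PiEq l l') : PiEq (f l) (f l') := by
  induction h with
  | rel a b hab => exact (hf a b hab).piEq
  | refl a => rfl
  | symm a b _ ih => exact ih.symm
  | trans a b c _ _ ih₁ ih₂ => exact ih₁.trans ih₂

theorem append_left (p : List X) (h : PiEq l l') : PiEq (p ++ l) (p ++ l') :=
  map_of_rstep (fun _ _ => RStep.append_left p) h

theorem append_right (s : List X) (h : PiEq l l') : PiEq (l ++ s) (l' ++ s) :=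
  map_of_rstep (fun _ _ => RStep.append_right s) h

theorem cons (a : X) (h : PiEq l l') : PiEq (a :: l) (a :: l') := h.append_left [a]

theorem reverse (h : PiEq l l') : PiEq l.reverse l'.reverse :=
  map_of_rstep (fun _ _ => RStep.reverse) h

theorem head?_eq (h : PiEq l l') : l.head? = l'.head? := by
  induction h with
  | rel a b hab => exact hab.head?_eq
  | refl a => rfl
  | symm a b _ ih => exact ih.symm
  | trans a b c _ _ ih₁ ih₂ => exact ih₁.trans ih₂

theorem getLast?_eq (h : PiEq l l') : l.getLast? = l'.getLast? := by
  simpa using h.reverse.head?_eq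

end PiEq

instance : @Trans (List X) (List X) (List X) PiEq PiEq PiEq := ⟨PiEq.trans⟩

theorem piEq_backtrack (a b : X) (l : List X) : PiEq (a :: b :: a :: l) (a :: l) :=
  RStep.piEq (Or.inl ⟨[], l, a, b, rfl, rfl⟩)

theorem piEq_loop (a : X) (l : List X) : PiEq (a :: a :: l) (a :: l) :=
  RStep.piEq (Or.inr ⟨[], l, a, rfl, rfl⟩)

theorem piEq_cons_of_head? {a : X} (h : l.head? = some a) : PiEq (a :: l) l := by
  obtain ⟨t, rfl⟩ : ∃ t, l = a :: t := List.head?_eq_some_iff.mp h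
  exact piEq_loop a t

theorem PiEq.of_cons {a b : X} (h : PiEq (a :: l) (a :: l')) (hl : l.head? = some b)
    (hl' : l'.head? = some b) : PiEq l l' := by
  obtain ⟨t, rfl⟩ := List.head?_eq_some_iff.mp hl
  obtain ⟨t', rfl⟩ := List.head?_eq_some_iff.mp hl'
  exact (piEq_backtrack b a t).symm.trans ((h.cons b).trans (piEq_backtrack b a t'))

end Reduction

section Reduced

variable {X : Type} {l l' K M : List X}

theorem drop_eq_cons_of_getElem? {i : ℕ} {x : X} (h : l[i]? = some x) :
    l.drop i = x :: l.drop (i + 1) := by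
  obtain ⟨hi, rfl⟩ := List.getElem?_eq_some_iff.mp h
  exact List.drop_eq_getElem_cons hi

theorem isReduced_iff_getElem? :
    IsReduced l ↔ ∀ i x, l[i]? = some x → l[i + 1]? ≠ some x ∧ l[i + 2]? ≠ some x := by
  constructor
  · intro h i x hx
    have hsplit := (List.take_append_drop i l).symm
    rw [drop_eq_cons_of_getElem? hx] at hsplit
    constructor
    · intro hx₁
      rw [drop_eq_cons_of_getElem? hx₁] at hsplit
      exact h _ (Or.inr ⟨l.take i, l.drop (i + 2), x, by simpa using hsplit, rfl⟩)
    · intro hx₂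
      obtain ⟨hlt, -⟩ := List.getElem?_eq_some_iff.mp hx₂
      have hy : l[i + 1]? = some l[i + 1] := List.getElem?_eq_getElem (by omega)
      rw [drop_eq_cons_of_getElem? hy, drop_eq_cons_of_getElem? hx₂] at hsplit
      exact h _ (Or.inl ⟨l.take i, l.drop (i + 3), x, _, by simpa using hsplit, rfl⟩)
  · rintro h l' (⟨p, s, x, y, rfl, -⟩ | ⟨p, s, x, rfl, -⟩)
    · exact (h p.length x (by simp)).2 (by simp)
    · exact (h p.length x (by simp)).1 (by simp)

theorem isReduced_singleton (a : X) : IsReduced [a] :=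
  isReduced_iff_getElem?.mpr fun i x => by cases i <;> simp

theorem IsReduced.cons {a : X} (h : IsReduced l) (h₀ : l[0]? ≠ some a) (h₁ : l[1]? ≠ some a) :
    IsReduced (a :: l) := by
  refine isReduced_iff_getElem?.mpr fun i x hx => ?_
  cases i with
  | zero =>
    simp only [List.getElem?_cons_zero, Option.some.injEq] at hx
    subst hx
    simpa using ⟨h₀, h₁⟩
  | succ i => simpa using isReduced_iff_getElem?.mp h i x (by simpa using hx)

theorem IsReduced.tail {a : X} (h : IsReduced (a :: l)) : IsReduced l :=
  fun l' hs => h (a :: l') (hs.append_left [a])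

theorem IsReduced.reverse (h : IsReduced l) : IsReduced l.reverse :=
  fun l' hs => h l'.reverse (by simpa using hs.reverse)

theorem IsReduced.ne_of_cons_cons {a b : X} (h : IsReduced (a :: b :: l)) : a ≠ b := by
  rintro rfl
  exact (isReduced_iff_getElem?.mp h 0 a rfl).1 rfl

theorem exists_reduced (l : List X) :
    ∃ r, PiEq l r ∧ IsReduced r ∧ ∀ R : X → X → Prop, l.IsChain R → r.IsChain R := by
  by_cases h : IsReduced l
  · exact ⟨l, .refl l, h, fun _ => id⟩
  · obtain ⟨l', hl'⟩ : ∃ l', RStep l l' := by simpa [IsReduced] using h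
    obtain ⟨r, hr, hred, hR⟩ := exists_reduced l'
    exact ⟨r, hl'.piEq.trans hr, hred, fun R hc => hR R (hl'.isChain hc)⟩
termination_by l.length
decreasing_by exact hl'.length_lt

/-- A step `a b` of a walk is encoded as the word `(a, b) (b, a)⁻¹`, so that a backtracking pair
cancels and a loop step is trivial. -/
def letters : List X → List ((X × X) × Bool)
  | [] => []
  | [_] => []
  | a :: b :: t => ((a, b), true) :: ((b, a), false) :: letters (b :: t)

theorem letters_append_cons (p s : List X) (x : X) :
    letters (p ++ x :: s) = letters (p ++ [x]) ++ letters (x :: s) := by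
  induction p with
  | nil => simp [letters]
  | cons a p ih =>
    cases p with
    | nil => simp [letters]
    | cons b p => simpa [letters] using ih

theorem mk_letters_eq_of_rstep (h : RStep l l') :
    FreeGroup.mk (letters l) = FreeGroup.mk (letters l') := by
  rcases h with ⟨p, s, x, y, rfl, rfl⟩ | ⟨p, s, x, rfl, rfl⟩
  · rw [show p ++ [x, y, x] ++ s = p ++ x :: y :: x :: s by simp,
      show p ++ [x] ++ s = p ++ x :: s by simp, letters_append_cons p (y :: x :: s),
      letters_append_cons p s,
      ← FreeGroup.mul_mk, ← FreeGroup.mul_mk]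
    congr 1
    exact (Quot.sound (FreeGroup.Red.Step.cons (FreeGroup.Red.Step.cons_not (b := false)))).trans
      (Quot.sound (FreeGroup.Red.Step.cons_not (b := true)))
  · rw [show p ++ [x, x] ++ s = p ++ x :: x :: s by simp,
      show p ++ [x] ++ s = p ++ x :: s by simp, letters_append_cons p (x :: s),
      letters_append_cons p s,
      ← FreeGroup.mul_mk, ← FreeGroup.mul_mk]
    congr 1
    exact Quot.sound (FreeGroup.Red.Step.cons_not (b := true))

theorem PiEq.mk_letters_eq (h : PiEq l l') :
    FreeGroup.mk (letters l) = FreeGroup.mk (letters l') := by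
  induction h with
  | rel a b hab => exact mk_letters_eq_of_rstep hab
  | refl a => rfl
  | symm a b _ ih => exact ih.symm
  | trans a b c _ _ ih₁ ih₂ => exact ih₁.trans ih₂

theorem IsReduced.letters : ∀ {l : List X}, IsReduced l → FreeGroup.IsReduced (letters l)
  | [], _ | [_], _ => FreeGroup.IsReduced.nil
  | [a, b], h => by simpa [HRecoloring.letters] using fun hab _ => h.ne_of_cons_cons hab
  | a :: b :: c :: t, h => by
    have hac : a ≠ c := fun hac => (isReduced_iff_getElem?.mp h 0 a rfl).2 (by simp [hac])
    simpa [HRecoloring.letters, h.ne_of_cons_cons, hac] using h.tail.letters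

theorem eq_of_letters_eq : ∀ {l l' : List X}, letters l = letters l' → l.head? = l'.head? → l = l'
  | [], [], _, _ => rfl
  | [a], [a'], _, hh => by simpa using hh
  | a :: b :: t, a' :: b' :: t', hl, _ => by
    simp only [letters, List.cons.injEq, Prod.mk.injEq] at hl
    obtain ⟨⟨⟨rfl, rfl⟩, -⟩, -, hrest⟩ := hl
    rw [eq_of_letters_eq hrest rfl]
  | [], [_], _, hh | [_], [], _, hh => by simp at hh
  | [], _ :: _ :: _, hl, _ | _ :: _ :: _, [], hl, _
  | [_], _ :: _ :: _, hl, _ | _ :: _ :: _, [_], hl, _ => by simp [letters] at hl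

theorem PiEq.eq_of_isReduced (h : PiEq l l') (hl : IsReduced l) (hl' : IsReduced l') : l = l' := by
  classical
  refine eq_of_letters_eq ?_ h.head?_eq
  simpa [FreeGroup.toWord_mk, hl.letters.reduce_eq, hl'.letters.reduce_eq] using
    congrArg FreeGroup.toWord h.mk_letters_eq

theorem IsReduced.isChain_of_piEq {R : X → X → Prop} (hl : IsReduced l) (h : PiEq l l')
    (hR : l'.IsChain R) : l.IsChain R := by
  obtain ⟨r, hr, hred, hchain⟩ := exists_reduced l'
  rw [(h.trans hr).eq_of_isReduced hl hred]
  exact hchain R hR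

theorem IsReduced.eq_of_piEq_cons {y : X} (hK : IsReduced K) (hM : IsReduced M)
    (h : PiEq (y :: K) M) : M = y :: K ∨ M = K ∨ M = K.tail := by
  match K, hK with
  | [], _ => exact .inl (h.eq_of_isReduced (isReduced_singleton y) hM).symm
  | a :: K, hK =>
    by_cases hya : y = a
    · subst hya
      exact .inr (.inl ((piEq_loop y K).symm.trans h |>.eq_of_isReduced hK hM).symm)
    by_cases hyb : K.head? = some y
    · obtain ⟨t, rfl⟩ := List.head?_eq_some_iff.mp hyb
      exact .inr (.inr ((piEq_backtrack y a t).symm.trans h |>.eq_of_isReduced hK.tail hM).symm)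
    · have hK' : IsReduced (y :: a :: K) :=
        hK.cons (by simpa using Ne.symm hya) (by simpa [List.head?_eq_getElem?] using hyb)
      exact .inl (h.eq_of_isReduced hK' hM).symm

theorem IsReduced.eq_of_piEq_snoc {y : X} (hK : IsReduced K) (hM : IsReduced M)
    (h : PiEq (K ++ [y]) M) : M = K ++ [y] ∨ M = K ∨ M = K.dropLast := by
  have := hK.reverse.eq_of_piEq_cons hM.reverse (by simpa using h.reverse)
  simpa [List.tail_reverse, List.reverse_eq_iff] using this

end Reduced

section Walks

variable {V X : Type} {G : Dgraph V} {a b c w : V} {W : List V}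

theorem IsWalk.singleton (G : Dgraph V) (v : V) : IsWalk G v v [v] :=
  ⟨List.cons_ne_nil _ _, rfl, rfl, List.isChain_singleton _⟩

theorem IsWalk.snoc (hW : IsWalk G a b W) (hbc : G.UAdj b c) : IsWalk G a c (W ++ [c]) := by
  obtain ⟨hne, hh, hl, hc⟩ := hW
  refine ⟨by simp, by rwa [List.head?_append_of_ne_nil _ hne], by simp, ?_⟩
  exact List.isChain_append.mpr ⟨hc, List.isChain_singleton _, by simpa [hl] using hbc⟩

theorem IsWalk.of_snoc (hW : IsWalk G a b (W ++ [w])) :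
    w = b ∧ (W = [] ∧ a = b ∨ ∃ c, IsWalk G a c W ∧ G.UAdj c b) := by
  obtain ⟨-, hh, hl, hc⟩ := hW
  obtain rfl : w = b := by simpa using hl
  refine ⟨rfl, ?_⟩
  rcases W.eq_nil_or_concat with rfl | ⟨W, c, rfl⟩
  · exact .inl ⟨rfl, by simpa using hh.symm⟩
  · obtain ⟨hc, -, hcw⟩ := List.isChain_append.mp hc
    exact .inr ⟨c, ⟨by simp, by simpa using hh, by simp, hc⟩, by simpa using hcw⟩

end Walks

section Conj

variable {V X : Type} {l₁ l₂ Q Q' : List X} {α β : V → X} {W : List V} {a v : V}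

theorem head?_wcomp (h : l₁.getLast? = l₂.head?) : (wcomp l₁ l₂).head? = l₁.head? := by
  cases l₁ with
  | nil => cases l₂ <;> simp_all [wcomp]
  | cons x l₁ => simp [wcomp]

theorem getLast?_wcomp (h : l₁.getLast? = l₂.head?) : (wcomp l₁ l₂).getLast? = l₂.getLast? := by
  match l₂ with
  | [] => simpa [wcomp] using h
  | [x] => simpa [wcomp] using h
  | x :: y :: t => simp [wcomp, List.getLast?_cons]

theorem wcomp_eq_dropLast_append {x : X} (h₁ : l₁.getLast? = some x) (h₂ : l₂.head? = some x) :
    wcomp l₁ l₂ = l₁.dropLast ++ l₂ := by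
  obtain ⟨t, rfl⟩ := List.head?_eq_some_iff.mp h₂
  rw [wcomp, ← List.dropLast_append_getLast? _ h₁]
  simp

theorem conj_singleton (hQ : Q.head? = some (α a)) : conj α β [a] Q = Q := by
  obtain ⟨t, rfl⟩ := List.head?_eq_some_iff.mp hQ
  simp [conj, wcomp]

theorem conj_append_singleton (hW : W ≠ []) (w : V) (Q : List X) :
    conj α β (W ++ [w]) Q = α w :: (conj α β W Q ++ [β w]) := by
  simp [conj, wcomp, List.tail_append_of_ne_nil (List.map_eq_nil_iff.not.mpr hW)]

theorem PiEq.conj (hW : W.head? = some a) (hQ : Q.head? = some (α a)) (h : PiEq Q Q') :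
    PiEq (conj α β W Q) (conj α β W Q') := by
  have hlast : (W.map α).reverse.getLast? = some (α a) := by simp [hW]
  rw [HRecoloring.conj, HRecoloring.conj, wcomp_eq_dropLast_append hlast hQ,
    wcomp_eq_dropLast_append hlast (h.head?_eq ▸ hQ), wcomp, wcomp]
  exact (h.append_left _).append_right _

theorem head?_conj {G : Dgraph V} {H : Dgraph X} {q : V} (hW : IsWalk G q v W)
    (hQ : IsWalk H (α q) (β q) Q) : (conj α β W Q).head? = some (α v) := by
  have h₁ : (W.map α).reverse.getLast? = Q.head? := by simp [hW.2.1, hQ.2.1]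
  rw [HRecoloring.conj, head?_wcomp, head?_wcomp h₁] <;> simp [getLast?_wcomp h₁, hW.2.1,
    hW.2.2.1, hQ.2.2.1]

theorem getLast?_conj {G : Dgraph V} {H : Dgraph X} {q : V} (hW : IsWalk G q v W)
    (hQ : IsWalk H (α q) (β q) Q) : (conj α β W Q).getLast? = some (β v) := by
  have h₁ : (W.map α).reverse.getLast? = Q.head? := by simp [hW.2.1, hQ.2.1]
  rw [HRecoloring.conj, getLast?_wcomp] <;> simp [getLast?_wcomp h₁, hW.2.1, hW.2.2.1, hQ.2.2.1]

end Conj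

section Transport

variable {V X : Type} {G : Dgraph V} {α β σ σ' : V → X} {S T : V → List X}

/-- `S v` plays the role of the vertex walk of `v`: along each edge `x y` of `G`,
`S y = α(y x) · S x · β(x y)` in `π(H)`. -/
def Compatible (G : Dgraph V) (α β : V → X) (S : V → List X) : Prop :=
  ∀ ⦃x y⦄, G.UAdj x y → PiEq (α y :: (S x ++ [β y])) (S y)

theorem Compatible.congr (hS : Compatible G α β S) (hST : ∀ u, PiEq (S u) (T u)) :
    Compatible G α β T :=
  fun _ _ hxy => (((hST _).symm.append_right _).cons _).trans ((hS hxy).trans (hST _))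

theorem Compatible.piEq_conj (hS : Compatible G α β S) {a : V} (ha : (S a).head? = some (α a)) :
    ∀ {b : V} {W : List V}, IsWalk G a b W → PiEq (conj α β W (S a)) (S b) := by
  intro b W hW
  induction W using List.reverseRecOn generalizing b with
  | nil => exact absurd rfl hW.1
  | append_singleton W w ih =>
    obtain ⟨rfl, ⟨rfl, rfl⟩ | ⟨c, hW', hcw⟩⟩ := hW.of_snoc
    · rw [List.nil_append, conj_singleton ha]
    · rw [conj_append_singleton hW'.1]
      exact (((ih hW').append_right _).cons _).trans (hS hcw)

theorem compatible_of_piEq_conj {q : V} {Q : List X} (hGconn : G.WConn)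
    (hS : ∀ v W, IsWalk G q v W → PiEq (conj α β W Q) (S v)) : Compatible G α β S := by
  intro x y hxy
  obtain ⟨W, hW⟩ := hGconn q x
  have hy := hS y _ (hW.snoc hxy)
  rw [conj_append_singleton hW.1] at hy
  exact (((hS x W hW).symm.append_right _).cons _).trans hy

def IsPushOrPullStep (G : Dgraph V) (σ σ' : V → X) : Prop :=
  (∃! u, σ u ≠ σ' u) ∧ ∀ u, σ u ≠ σ' u → ∀ w, G.UAdj u w → σ w = σ u ∨ σ w = σ' u

theorem IsPushOrPullStep.square (h : IsPushOrPullStep G σ σ') ⦃x y : V⦄ (hxy : G.UAdj x y) :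
    PiEq [σ y, σ x, σ' x] [σ y, σ' y, σ' x] := by
  obtain ⟨⟨u, -, huniq⟩, hpp⟩ := h
  by_cases hx : σ x = σ' x <;> by_cases hy : σ y = σ' y
  · rw [← hx, ← hy]
    exact ((piEq_loop _ []).cons _).trans (piEq_loop _ _).symm
  · rw [← hx]
    rcases hpp y hy x hxy.symm with h | h <;> rw [h]
    exact (piEq_loop _ _).trans ((piEq_loop _ _).trans (piEq_backtrack _ _ []).symm)
  · rw [← hy]
    rcases hpp x hx y hxy with h | h <;> rw [h]
    exact (piEq_backtrack _ _ []).trans ((piEq_loop _ _).trans (piEq_loop _ _)).symm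
  · obtain rfl : x = y := (huniq x hx).trans (huniq y hy).symm
    exact (piEq_loop _ _).trans ((piEq_loop _ []).cons _).symm

theorem Compatible.cons
    (hsq : ∀ ⦃x y⦄, G.UAdj x y → PiEq [σ y, σ x, σ' x] [σ y, σ' y, σ' x])
    (hT : Compatible G σ' β T) (hhead : ∀ u, (T u).head? = some (σ' u)) :
    Compatible G σ β (fun u => σ u :: T u) := by
  intro x y hxy
  obtain ⟨t, ht⟩ := List.head?_eq_some_iff.mp (hhead x)
  calc σ y :: ((σ x :: T x) ++ [β y]) = [σ y, σ x, σ' x] ++ (t ++ [β y]) := by simp [ht]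
    PiEq _ ([σ y, σ' y, σ' x] ++ (t ++ [β y])) := (hsq hxy).append_right _
    _ = σ y :: σ' y :: (T x ++ [β y]) := by simp [ht]
    PiEq _ (σ y :: T y) := (hT hxy).cons _

theorem compatible_colorWalk :
    ∀ {σs : List (V → X)} {α β : V → X}, σs.IsChain (IsPushOrPullStep G) →
      σs.head? = some α → σs.getLast? = some β → Compatible G α β (colorWalk σs)
  | [σ], _, _, _, rfl, rfl => fun x y _ => piEq_backtrack (σ y) (σ x) []
  | σ :: σ' :: σs, _, _, hc, rfl, hl => by
    obtain ⟨hstep, hc⟩ := List.isChain_cons_cons.mp hc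
    exact Compatible.cons hstep.square (compatible_colorWalk hc rfl (by simpa using hl))
      fun _ => rfl

end Transport

section NullHomotopy

variable {V X : Type} {G : Dgraph V} {α α' : V → X}

def NullHomotopic (G : Dgraph V) (α : V → X) : Prop :=
  ∀ v C, IsWalk G v v C → PiEq (C.map α) [α v]

theorem NullHomotopic.of_step (hα : NullHomotopic G α) (h : IsPushOrPullStep G α α') :
    NullHomotopic G α' := by
  intro u C hC
  have hcomp : Compatible G α α' (colorWalk [α, α']) :=
    compatible_colorWalk (List.isChain_pair.mpr h) rfl rfl
  have hhead : (C.map α').head? = some (α' u) := by simp [hC.2.1]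
  have key : PiEq (α u :: C.map α') [α u, α' u] := calc
    α u :: C.map α' = [α u] ++ [α' u] ++ (C.map α').tail := by
      simp [List.cons_head?_tail hhead]
    PiEq _ ((C.map α).reverse ++ [α' u] ++ (C.map α').tail) := by
      refine ((PiEq.append_right _ ?_).append_right _).symm
      simpa using (hα u C hC).reverse
    PiEq _ [α u, α' u] := hcomp.piEq_conj rfl hC
  exact key.of_cons hhead rfl

theorem isReduced_map_range {g : ℕ → X} (h : ∀ k, g (k + 1) ≠ g k ∧ g (k + 2) ≠ g k) (n : ℕ) :
    IsReduced ((List.range n).map g) := by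
  refine isReduced_iff_getElem?.mpr fun i x hx => ?_
  obtain ⟨hi, rfl⟩ := List.getElem?_eq_some_iff.mp hx
  constructor <;> intro hx' <;> obtain ⟨_, hx'⟩ := List.getElem?_eq_some_iff.mp hx' <;> simp at hx'
  exacts [(h i).1 hx', (h i).2 hx']

/-- By pigeonhole the walk closes up, and its image is then a nontrivial reduced closed walk. -/
theorem NullHomotopic.not_forall_isReduced_image [Finite V] (hα : NullHomotopic G α)
    (f : ℕ → V) (hadj : ∀ k, G.UAdj (f k) (f (k + 1))) :
    ¬ ∀ k, α (f (k + 1)) ≠ α (f k) ∧ α (f (k + 2)) ≠ α (f k) := by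
  intro h
  obtain ⟨i, j, hij, hf⟩ : ∃ i j, i < j ∧ f i = f j := by
    obtain ⟨i, j, hne, hf⟩ := Finite.exists_ne_map_eq_of_infinite f
    rcases hne.lt_or_gt with hlt | hlt
    exacts [⟨i, j, hlt, hf⟩, ⟨j, i, hlt, hf.symm⟩]
  obtain ⟨n, rfl⟩ : ∃ n, j = i + n := ⟨j - i, by omega⟩
  have hn : 2 ≤ n := by
    by_contra hn
    obtain rfl : n = 1 := by omega
    exact (h i).1 (by rw [← hf])
  set C := (List.range (n + 1)).map fun s => f (i + s)
  have hC : IsWalk G (f i) (f i) C := by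
    refine ⟨by simp [C], by simp [C, List.range_succ_eq_map], by simp [C, List.range_succ, hf], ?_⟩
    show List.IsChain _ _
    simpa [C, List.isChain_map, List.isChain_range_succ] using
      fun m _ => by simpa [Nat.add_assoc] using hadj (i + m)
  have hred : IsReduced (C.map α) := by
    simpa [C, Function.comp_def] using isReduced_map_range (g := fun s => α (f (i + s)))
      (fun k => by simpa [Nat.add_assoc] using h (i + k)) (n + 1)
  have := congrArg List.length ((hα _ C hC).eq_of_isReduced hred (isReduced_singleton _))
  simp [C] at this
  omega

end NullHomotopy

section SymWalkSystem

variable {V X : Type} {G : Dgraph V} {H : Dgraph X} {α β : V → X} {S : V → List X} {v : V}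
  {c : X} {t : List X}

structure SymWalkSystem (G : Dgraph V) (H : Dgraph X) (α β : V → X) (S : V → List X) : Prop where
  head : ∀ v, (S v).head? = some (α v)
  getLast : ∀ v, (S v).getLast? = some (β v)
  reduced : ∀ v, IsReduced (S v)
  symm : ∀ v, IsSymWalk H (S v)
  hom : IsHom G H α
  null : NullHomotopic G α
  compat : Compatible G α β S

theorem SymWalkSystem.ne_of_eq_cons (hS : SymWalkSystem G H α β S) (hSv : S v = α v :: c :: t) :
    α v ≠ c :=
  (hSv ▸ hS.reduced v).ne_of_cons_cons

theorem SymWalkSystem.symm_cons (hS : SymWalkSystem G H α β S) (hSv : S v = α v :: c :: t) :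
    (H.Adj (α v) c ∧ H.Adj c (α v)) ∧ IsSymWalk H (c :: t) := by
  have h : List.IsChain (fun a b => H.Adj a b ∧ H.Adj b a) (S v) := hS.symm v
  rw [hSv] at h
  exact List.isChain_cons_cons.mp h

/-- `α(w v) · S v · β(v w)` cannot cancel at the front, and by maximality of `S v` it must cancel
at the back. -/
theorem SymWalkSystem.eq_cons_dropLast (hS : SymWalkSystem G H α β S) {v w : V}
    (hmax : ∀ u, (S u).length ≤ (S v).length) (hv : 2 ≤ (S v).length) (hvw : G.UAdj v w)
    (h₀ : α w ≠ α v) (h₁ : (S v)[1]? ≠ some (α w)) : S w = α w :: (S v).dropLast := by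
  have hK : IsReduced (α w :: S v) :=
    (hS.reduced v).cons (by simpa [← List.head?_eq_getElem?, hS.head v] using h₀.symm) h₁
  have hlen := hmax w
  rcases hK.eq_of_piEq_snoc (hS.reduced w) (by simpa using hS.compat hvw) with h | h | h <;>
    rw [h] at hlen ⊢
  · simp at hlen
  · simp at hlen
  · exact List.dropLast_cons_of_ne_nil (List.ne_nil_of_length_pos (by omega))

theorem SymWalkSystem.exists_recolorable [Finite V] (hS : SymWalkSystem G H α β S)
    (h : ∃ v, 2 ≤ (S v).length) :
    ∃ v c t, S v = α v :: c :: t ∧ ∀ w, G.UAdj v w → α w = α v ∨ α w = c := by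
  obtain ⟨v₁, hv₁⟩ := h
  have : Nonempty V := ⟨v₁⟩
  obtain ⟨v₀, hmax⟩ : ∃ v₀, ∀ u, (S u).length ≤ (S v₀).length :=
    Finite.exists_max fun v => (S v).length
  by_contra! hcon
  have hbad : ∀ v, 2 ≤ (S v).length →
      ∃ w, G.UAdj v w ∧ α w ≠ α v ∧ (S v)[1]? ≠ some (α w) := by
    intro v hv
    obtain ⟨c, t, hSv⟩ : ∃ c t, S v = α v :: c :: t := by
      obtain ⟨l, hl⟩ := List.head?_eq_some_iff.mp (hS.head v)
      match l, hl with
      | c :: t, hl => exact ⟨c, t, hl⟩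
      | [], hl => simp [hl] at hv
    obtain ⟨w, hvw, hw₀, hw₁⟩ := hcon v c t hSv
    exact ⟨w, hvw, hw₀, by simpa [hSv] using hw₁.symm⟩
  choose! next hnext using hbad
  set f : ℕ → V := fun k => next^[k] v₀
  have hf : ∀ k, f (k + 1) = next (f k) := fun k => Function.iterate_succ_apply' next k v₀
  have hlong : ∀ k, (S (f k)).length = (S v₀).length := by
    intro k
    induction k with
    | zero => rfl
    | succ k ih =>
      have h2 : 2 ≤ (S (f k)).length := by have := hmax v₁; omega
      obtain ⟨hadj, h₀, h₁⟩ := hnext (f k) h2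
      rw [hf, hS.eq_cons_dropLast (ih ▸ hmax) h2 hadj h₀ h₁]
      simp only [List.length_cons, List.length_dropLast]
      omega
  have hstep : ∀ k, G.UAdj (f k) (f (k + 1)) ∧ α (f (k + 1)) ≠ α (f k) ∧
      (S (f k))[1]? ≠ some (α (f (k + 1))) ∧ (S (f (k + 1)))[1]? = some (α (f k)) := by
    intro k
    have h2 : 2 ≤ (S (f k)).length := by have := hmax v₁; have := hlong k; omega
    obtain ⟨hadj, h₀, h₁⟩ := hnext (f k) h2
    refine ⟨hf k ▸ hadj, hf k ▸ h₀, hf k ▸ h₁, ?_⟩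
    rw [hf, hS.eq_cons_dropLast ((hlong k).symm ▸ hmax) h2 hadj h₀ h₁]
    obtain ⟨t, ht⟩ := List.head?_eq_some_iff.mp (hS.head (f k))
    rw [ht] at h2 ⊢
    have ht' : t ≠ [] := by rintro rfl; simp at h2
    simp [List.getElem?_dropLast, ht']
  refine hS.null.not_forall_isReduced_image f (fun k => (hstep k).1) fun k => ⟨(hstep k).2.1, ?_⟩
  intro heq
  exact (hstep (k + 1)).2.2.1 (heq ▸ (hstep k).2.2.2)

end SymWalkSystem

section Recolor

open Function

variable {V X : Type} [DecidableEq V] {G : Dgraph V} {H : Dgraph X} {α β : V → X}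
  {S : V → List X} {v : V} {c : X} {t : List X}

theorem isPushOrPullStep_update (hc : α v ≠ c) (hrec : ∀ w, G.UAdj v w → α w = α v ∨ α w = c) :
    IsPushOrPullStep G α (update α v c) := by
  have hdiff : ∀ u, α u ≠ update α v c u ↔ u = v := by
    intro u
    by_cases hu : u = v <;> simp [hu, hc]
  refine ⟨⟨v, (hdiff v).2 rfl, fun u hu => (hdiff u).1 hu⟩, fun u hu w hw => ?_⟩
  obtain rfl := (hdiff u).1 hu
  simpa using hrec w hw

/-- Around `v`, all colors before and after the recoloring lie in the clique `{α v, c}`. -/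
theorem adj_of_update (hHrefl : H.IsReflexive) (hα : IsHom G H α)
    (hc : H.Adj (α v) c ∧ H.Adj c (α v)) (hrec : ∀ w, G.UAdj v w → α w = α v ∨ α w = c)
    ⦃x y : V⦄ (hxy : G.Adj x y) {a b : X} (ha : a = α x ∨ a = update α v c x)
    (hb : b = α y ∨ b = update α v c y) : H.Adj a b := by
  have hclique : ∀ a b, (a = α v ∨ a = c) → (b = α v ∨ b = c) → H.Adj a b := by
    rintro a b (rfl | rfl) (rfl | rfl)
    exacts [hHrefl _, hc.1, hc.2, hHrefl _]
  have hnear : ∀ u, u = v ∨ G.UAdj v u → ∀ d, d = α u ∨ d = update α v c u → d = α v ∨ d = c := by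
    rintro u hu d hd
    by_cases huv : u = v
    · subst huv
      simpa using hd
    · simp only [update_of_ne huv, or_self] at hd
      exact hd ▸ hrec u (hu.resolve_left huv)
  by_cases hx : x = v
  · subst hx
    exact hclique a b (hnear _ (.inl rfl) a ha) (hnear _ (.inr (.inl hxy)) b hb)
  by_cases hy : y = v
  · subst hy
    exact hclique a b (hnear _ (.inr (.inr hxy)) a ha) (hnear _ (.inl rfl) b hb)
  simp only [update_of_ne hx, update_of_ne hy, or_self] at ha hb
  exact ha ▸ hb ▸ hα hxy

theorem SymWalkSystem.hom1Adj_update (hHrefl : H.IsReflexive) (hS : SymWalkSystem G H α β S)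
    (hSv : S v = α v :: c :: t) (hrec : ∀ w, G.UAdj v w → α w = α v ∨ α w = c) :
    Hom1Adj G H α (update α v c) :=
  have hadj := adj_of_update hHrefl hS.hom (hS.symm_cons hSv).1 hrec
  ⟨(isPushOrPullStep_update (hS.ne_of_eq_cons hSv) hrec).1,
    fun _ _ hxy => ⟨hadj hxy (.inl rfl) (.inr rfl), hadj hxy (.inr rfl) (.inl rfl)⟩⟩

theorem SymWalkSystem.piEq_cons_update (hS : SymWalkSystem G H α β S)
    (hSv : S v = α v :: c :: t) (u : V) : PiEq (α u :: update S v (c :: t) u) (S u) := by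
  by_cases hu : u = v
  · subst hu
    simp [hSv, PiEq.refl]
  · simpa [hu] using piEq_cons_of_head? (hS.head u)

theorem SymWalkSystem.recolor (hHrefl : H.IsReflexive) (hS : SymWalkSystem G H α β S)
    (hSv : S v = α v :: c :: t) (hrec : ∀ w, G.UAdj v w → α w = α v ∨ α w = c) :
    SymWalkSystem G H (update α v c) β (update S v (c :: t)) := by
  have hstep := isPushOrPullStep_update (hS.ne_of_eq_cons hSv) hrec
  have hadj := adj_of_update hHrefl hS.hom (hS.symm_cons hSv).1 hrec
  refine ⟨fun u => ?_, (forall_update_iff S fun u L => L.getLast? = some (β u)).mpr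
    ⟨by simpa [hSv] using hS.getLast v, fun u _ => hS.getLast u⟩,
    (forall_update_iff S fun _ => IsReduced).mpr
      ⟨(hSv ▸ hS.reduced v).tail, fun u _ => hS.reduced u⟩,
    (forall_update_iff S fun _ => IsSymWalk H).mpr ⟨(hS.symm_cons hSv).2, fun u _ => hS.symm u⟩,
    fun x y hxy => hadj hxy (.inr rfl) (.inr rfl), hS.null.of_step hstep, ?_⟩
  · by_cases hu : u = v
    · simp [hu]
    · simp [hu, hS.head u]
  · have hsq : ∀ ⦃x y⦄, G.UAdj x y →
        PiEq [update α v c y, update α v c x, α x] [update α v c y, α y, α x] :=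
      fun x y hxy => by simpa using (hstep.square hxy.symm).reverse.symm
    refine (Compatible.cons hsq hS.compat hS.head).congr fun u => ?_
    by_cases hu : u = v
    · subst hu
      simpa [hSv] using piEq_backtrack c (α u) t
    · simpa [hu] using piEq_cons_of_head? (hS.head u)

end Recolor

section Construction

variable {V X : Type} {G : Dgraph V} {H : Dgraph X} {β : V → X}

theorem SymWalkSystem.eq_of_length_le_one {α : V → X} {S : V → List X}
    (hS : SymWalkSystem G H α β S) (h : ∀ v, (S v).length ≤ 1) (v : V) :
    S v = [α v] ∧ α v = β v := by
  obtain ⟨t, ht⟩ := List.head?_eq_some_iff.mp (hS.head v)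
  obtain rfl : t = [] := List.eq_nil_of_length_eq_zero (by simpa [ht] using h v)
  exact ⟨ht, by simpa [ht] using hS.getLast v⟩

theorem SymWalkSystem.exists_hom1Seq [Fintype V] {α : V → X} {S : V → List X}
    (hHrefl : H.IsReflexive) (hS : SymWalkSystem G H α β S) :
    ∃ σs, Hom1Seq G H σs ∧ σs.head? = some α ∧ σs.getLast? = some β ∧ PushOrPull G σs ∧
      ∀ v, PiEq (colorWalk σs v) (S v) := by
  classical
  by_cases htriv : ∀ v, (S v).length ≤ 1
  · obtain rfl : α = β := funext fun v => (hS.eq_of_length_le_one htriv v).2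
    refine ⟨[α], ⟨List.cons_ne_nil _ _, by simpa using hS.hom, List.isChain_singleton _⟩, rfl,
      rfl, List.isChain_singleton _, fun v => ?_⟩
    rw [(hS.eq_of_length_le_one htriv v).1]
    rfl
  obtain ⟨v, c, t, hSv, hrec⟩ :=
    hS.exists_recolorable (by simpa [Nat.lt_iff_add_one_le] using htriv)
  have hshorter : ∑ u, (Function.update S v (c :: t) u).length < ∑ u, (S u).length := by
    refine Finset.sum_lt_sum (fun u _ => ?_) ⟨v, Finset.mem_univ v, by simp [hSv]⟩
    by_cases hu : u = v
    · simp [hu, hSv]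
    · simp [hu]
  obtain ⟨σs, ⟨hne, hhom, hchain⟩, hh, hl, hpp, hpe⟩ :=
    (hS.recolor hHrefl hSv hrec).exists_hom1Seq hHrefl
  refine ⟨α :: σs, ⟨List.cons_ne_nil _ _, ?_, ?_⟩, rfl, ?_, ?_, fun u => ?_⟩
  · simpa [hS.hom] using hhom
  · exact List.isChain_cons.mpr ⟨by simpa [hh] using hS.hom1Adj_update hHrefl hSv hrec, hchain⟩
  · simpa [List.getLast?_cons_of_ne_nil hne]
  · exact List.isChain_cons.mpr
      ⟨by simpa [hh] using (isPushOrPullStep_update (hS.ne_of_eq_cons hSv) hrec).2, hpp⟩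
  · exact ((hpe u).cons (α u)).trans (hS.piEq_cons_update hSv u)
termination_by ∑ u, (S u).length
decreasing_by exact hshorter

end Construction

section Realization

variable {V X : Type} {G : Dgraph V} {H : Dgraph X} {σs : List (V → X)}

theorem isSymWalk_colorWalk (hGrefl : G.IsReflexive) (h : σs.IsChain (Hom1Adj G H)) (v : V) :
    IsSymWalk H (colorWalk σs v) :=
  (List.isChain_map _).mpr (h.imp fun _ _ hσ => hσ.2 (hGrefl v))

theorem isChain_isPushOrPullStep (h : σs.IsChain (Hom1Adj G H)) (hpp : PushOrPull G σs) :
    σs.IsChain (IsPushOrPullStep G) := by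
  change List.IsChain _ σs at hpp
  rw [List.isChain_iff_forall_rel_of_append_cons_cons] at h hpp ⊢
  exact fun _ _ _ _ he => ⟨(h he).1, hpp he⟩

end Realization

end HRecoloring

open HRecoloring
theorem statement17_general {V X : Type} [Fintype V]
    (G : Dgraph V) (H : Dgraph X)
    (hGrefl : G.IsReflexive) (hHrefl : H.IsReflexive)
    (hGconn : G.WConn)
    (α β : V → X) (hα : IsHom G H α)
    (hnull : ∀ (v₀ : V) (C : List V), IsWalk G v₀ v₀ C →
      PiEq (C.map α) [α v₀] ∧ PiEq (C.map β) [β v₀])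
    (q : V) (Q : List X)
    (hQ : IsWalk H (α q) (β q) Q)
    (S : V → List X) (hSred : ∀ v, IsReduced (S v))
    (hSpi : ∀ (v : V) (Wl : List V), IsWalk G q v Wl →
      PiEq (conj α β Wl Q) (S v)) :
    DRealizable G H α β q Q ↔
      (∀ C : List V, 3 ≤ C.length → C.Chain' G.Adj →
        C.head? = C.getLast? → ∀ v ∈ C, IsSymWalk H (S v)) := by
  constructor
  · rintro ⟨σs, ⟨-, -, hchain⟩, hh, hl, hpp, hpe⟩ C - - - v -
    obtain ⟨W, hW⟩ := hGconn q v
    have hcomp := compatible_colorWalk (isChain_isPushOrPullStep hchain hpp) hh hl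
    refine (hSred v).isChain_of_piEq ?_ (isSymWalk_colorWalk hGrefl hchain v)
    calc PiEq (S v) (conj α β W Q) := (hSpi v W hW).symm
      PiEq _ (conj α β W (colorWalk σs q)) := hpe.symm.conj hW.2.1 hQ.2.1
      PiEq _ (colorWalk σs v) := hcomp.piEq_conj (by simp [colorWalk, hh]) hW
  · intro hsym
    have hS : SymWalkSystem G H α β S :=
      { head := fun v => by
          obtain ⟨W, hW⟩ := hGconn q v
          rw [← (hSpi v W hW).head?_eq, head?_conj hW hQ]
        getLast := fun v => by
          obtain ⟨W, hW⟩ := hGconn q v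
          rw [← (hSpi v W hW).getLast?_eq, getLast?_conj hW hQ]
        reduced := hSred
        symm := fun v => hsym [v, v, v] (by simp)
          (List.isChain_cons_cons.mpr ⟨hGrefl v, List.isChain_pair.mpr (hGrefl v)⟩) rfl v (by simp)
        hom := hα
        null := fun v C hC => (hnull v C hC).1
        compat := compatible_of_piEq_conj hGconn hSpi }
    obtain ⟨σs, hseq, hh, hl, hpp, hpe⟩ := hS.exists_hom1Seq hHrefl
    have hQS : PiEq Q (S q) := by
      simpa [conj_singleton hQ.2.1] using hSpi q [q] (.singleton G q)
    exact ⟨σs, hseq, hh, hl, hpp, (hpe q).trans hQS.symm⟩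

/-- For reflexive digraphs with `α(C) = β(C) = ε` for all closed walks `C`, a
reduced walk `Q` from `α q` to `β q` is `H`-realizable (via a push-or-pull
Hom₁ recoloring sequence) iff for every directed closed walk
`u₁ → … → u_n → u₁` in `G` (`n ≥ 2`), all the generated vertex walks `S_{u_k}`
are symmetric. -/
theorem statement17 {V X : Type} [Fintype V] [Fintype X]
    (G : Dgraph V) (H : Dgraph X)
    (hGrefl : G.IsReflexive) (hHrefl : H.IsReflexive)
    (hGconn : G.WConn) (hHconn : H.WConn)
    (α β : V → X) (hα : IsHom G H α) (hβ : IsHom G H β)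
    (hnull : ∀ (v₀ : V) (C : List V), IsWalk G v₀ v₀ C →
      PiEq (C.map α) [α v₀] ∧ PiEq (C.map β) [β v₀])
    (q : V) (Q : List X)
    (hQ : IsWalk H (α q) (β q) Q) (hQred : IsReduced Q)
    (S : V → List X) (hSred : ∀ v, IsReduced (S v))
    (hSpi : ∀ (v : V) (Wl : List V), IsWalk G q v Wl →
      PiEq (conj α β Wl Q) (S v)) :
    DRealizable G H α β q Q ↔
      (∀ C : List V, 3 ≤ C.length → C.Chain' G.Adj →
        C.head? = C.getLast? → ∀ v ∈ C, IsSymWalk H (S v)) :=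
  statement17_general G H hGrefl hHrefl hGconn α β hα hnull q Q hQ S hSred hSpi
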